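/- arXiv:1105.1805 — 6 statements merged into one kernel-verified Lean document; each statement's English description precedes it below -/
import Mathlib

section
/- Let M be a nonempty compact Hausdorff topological space, let ζ : C(M,ℝ) → ℝ be a functional, let φ : M → M be a homeomorphism satisfying ζ(H ∘ φ) = ζ(H) for every H ∈ C(M,ℝ), and let X ⊆ M be a nonempty closed subset that is superheavy for ζ. Then the image φ(X) is also superheavy for ζ, and consequently φ(X) ∩ X ≠ ∅. -/
/-- A nonempty closed subset `X` of a compact space `M` is superheavy for a functional
`ζ : C(M,ℝ) → ℝ` if `inf_{x ∈ X} H x ≤ ζ H ≤ sup_{x ∈ X} H x` for all `H`. -/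
def Superheavy {M : Type*} [TopologicalSpace M] (ζ : C(M, ℝ) → ℝ) (X : Set M) : Prop :=
  ∀ H : C(M, ℝ), sInf (H '' X) ≤ ζ H ∧ ζ H ≤ sSup (H '' X)

/-!
Pulling a test function `H` back along `φ` turns the superheaviness bounds for `X` and `H ∘ φ`
into those for `φ '' X` and `H`. Two disjoint closed sets are separated by an Urysohn function
`f` equal to `0` on one and `1` on the other; superheaviness of both would force `1 ≤ ζ f ≤ 0`.
-/

namespace Superheavy

variable {M : Type*} [TopologicalSpace M] {ζ : C(M, ℝ) → ℝ} {X Y : Set M}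

theorem image_of_comp_invariant {f : C(M, M)} (hinv : ∀ H : C(M, ℝ), ζ (H.comp f) = ζ H)
    (hX : Superheavy ζ X) : Superheavy ζ (f '' X) := by
  intro H
  rw [← Set.image_comp, ← hinv H]
  exact hX (H.comp f)

theorem inter_nonempty [NormalSpace M] (hX : Superheavy ζ X) (hY : Superheavy ζ Y)
    (hXne : X.Nonempty) (hYne : Y.Nonempty) (hXcl : IsClosed X) (hYcl : IsClosed Y) :
    (X ∩ Y).Nonempty := by
  by_contra hdisj
  obtain ⟨f, hf0, hf1, -⟩ := exists_continuous_zero_one_of_isClosed hXcl hYcl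
    (Set.not_nonempty_iff_eq_empty.mp hdisj |> Set.disjoint_iff_inter_eq_empty.mpr)
  have hfX : f '' X = {0} := hf0.image_eq.trans (hXne.image_const 0)
  have hfY : f '' Y = {1} := hf1.image_eq.trans (hYne.image_const 1)
  have hle := (hX f).2
  have hge := (hY f).1
  rw [hfX, csSup_singleton] at hle
  rw [hfY, csInf_singleton] at hge
  linarith

end Superheavy

theorem superheavy_image_nondisplaceable_general {M : Type*} [TopologicalSpace M] [CompactSpace M]
    [T2Space M] (ζ : C(M, ℝ) → ℝ) (φ : M ≃ₜ M)
    (hinv : ∀ H : C(M, ℝ), ζ (H.comp (φ : C(M, M))) = ζ H)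
    (X : Set M) (hXne : X.Nonempty) (hXcl : IsClosed X) (hX : Superheavy ζ X) :
    Superheavy ζ (φ '' X) ∧ (φ '' X ∩ X).Nonempty := by
  have hφX : Superheavy ζ (φ '' X) := hX.image_of_comp_invariant hinv
  exact ⟨hφX, hφX.inter_nonempty hX (hXne.image φ) hXne (φ.isClosedMap X hXcl) hXcl⟩

/-- The image of a superheavy set under an invariance homeomorphism is superheavy;
in particular a superheavy set of an invariant functional is non-displaceable. -/
theorem superheavy_image_nondisplaceable {M : Type*} [TopologicalSpace M] [CompactSpace M]
    [T2Space M] [Nonempty M] (ζ : C(M, ℝ) → ℝ) (φ : M ≃ₜ M)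
    (hinv : ∀ H : C(M, ℝ), ζ (H.comp (φ : C(M, M))) = ζ H)
    (X : Set M) (hXne : X.Nonempty) (hXcl : IsClosed X) (hX : Superheavy ζ X) :
    Superheavy ζ (φ '' X) ∧ (φ '' X ∩ X).Nonempty :=
  superheavy_image_nondisplaceable_general ζ φ hinv X hXne hXcl hX
end

section
/- Let M be a nonempty compact Hausdorff topological space, let m ≥ 1, let ζ₁, …, ζ_m : C(M,ℝ) → ℝ be functionals, and let X₁, …, X_m ⊆ M be nonempty closed subsets that are pairwise disjoint, with X_i superheavy for ζ_i for each i. Then ζ₁, …, ζ_m are linearly independent in the real vector space of all functions from C(M,ℝ) to ℝ: if a₁, …, a_m ∈ ℝ satisfy a₁ζ₁(H) + ⋯ + a_mζ_m(H) = 0 for every H ∈ C(M,ℝ), then a₁ = ⋯ = a_m = 0. -/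
open Set Function

theorem Superheavy.apply_eq_of_eqOn_const {M : Type*} [TopologicalSpace M]
    {ζ : C(M, ℝ) → ℝ} {X : Set M} (hsh : Superheavy ζ X) (hne : X.Nonempty)
    {H : C(M, ℝ)} {c : ℝ} (hH : EqOn H (fun _ ↦ c) X) : ζ H = c := by
  have himage : H '' X = {c} := (image_congr hH).trans (hne.image_const c)
  obtain ⟨hinf, hsup⟩ := hsh H
  rw [himage, csInf_singleton] at hinf
  rw [himage, csSup_singleton] at hsup
  exact le_antisymm hsup hinf

theorem exists_continuous_eqOn_one_eqOn_zero_of_pairwise_disjoint {M ι : Type*}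
    [TopologicalSpace M] [NormalSpace M] [Finite ι] {X : ι → Set M}
    (hcl : ∀ i, IsClosed (X i)) (hdisj : Pairwise (Disjoint on X)) (i : ι) :
    ∃ H : C(M, ℝ), EqOn H 1 (X i) ∧ ∀ j ≠ i, EqOn H 0 (X j) := by
  set others := ⋃ j ∈ {j | j ≠ i}, X j
  have hothers_closed : IsClosed others :=
    (toFinite _).isClosed_biUnion fun j _ ↦ hcl j
  have hothers_disj : Disjoint others (X i) :=
    disjoint_iUnion₂_left.2 fun j hj ↦ hdisj hj
  obtain ⟨H, hH0, hH1, -⟩ :=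
    exists_continuous_zero_one_of_isClosed hothers_closed (hcl i) hothers_disj
  exact ⟨H, hH1, fun j hj ↦ hH0.mono (subset_biUnion_of_mem (u := X) hj)⟩

theorem superheavy_linear_independent_general {M : Type*} [TopologicalSpace M] [CompactSpace M]
    [T2Space M] (m : ℕ)
    (ζ : Fin m → (C(M, ℝ) → ℝ)) (X : Fin m → Set M)
    (hne : ∀ i, (X i).Nonempty) (hcl : ∀ i, IsClosed (X i))
    (hdisj : ∀ i j, i ≠ j → Disjoint (X i) (X j))
    (hsh : ∀ i, Superheavy (ζ i) (X i)) :
    ∀ a : Fin m → ℝ, (∀ H : C(M, ℝ), ∑ i, a i * ζ i H = 0) → ∀ i, a i = 0 := by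
  intro a hsum i
  obtain ⟨H, hH_one, hH_zero⟩ :=
    exists_continuous_eqOn_one_eqOn_zero_of_pairwise_disjoint hcl (fun j k ↦ hdisj j k) i
  have hζH : ∀ j, ζ j H = if j = i then 1 else 0 := by
    intro j
    split_ifs with hji
    · subst hji
      exact (hsh j).apply_eq_of_eqOn_const (hne j) hH_one
    · exact (hsh j).apply_eq_of_eqOn_const (hne j) (hH_zero j hji)
  simpa [hζH] using hsum H

/-- Functionals with pairwise disjoint nonempty closed superheavy sets are
linearly independent. -/
theorem superheavy_linear_independent {M : Type*} [TopologicalSpace M] [CompactSpace M]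
    [T2Space M] [Nonempty M] (m : ℕ) (hm : 1 ≤ m)
    (ζ : Fin m → (C(M, ℝ) → ℝ)) (X : Fin m → Set M)
    (hne : ∀ i, (X i).Nonempty) (hcl : ∀ i, IsClosed (X i))
    (hdisj : ∀ i j, i ≠ j → Disjoint (X i) (X j))
    (hsh : ∀ i, Superheavy (ζ i) (X i)) :
    ∀ a : Fin m → ℝ, (∀ H : C(M, ℝ), ∑ i, a i * ζ i H = 0) → ∀ i, a i = 0 :=
  superheavy_linear_independent_general m ζ X hne hcl hdisj hsh
end

section
/- Let G and Q be groups, let μ : G → ℝ be a homogeneous quasi-morphism, i.e. μ(gⁿ) = n·μ(g) for all g ∈ G and all integers n, and there exists D ≥ 0 with |μ(g₁g₂) − μ(g₁) − μ(g₂)| ≤ D for all g₁, g₂ ∈ G. Let Θ : Q → G be any function such that μ(Θ(q₁q₂)⁻¹·Θ(q₁)·Θ(q₂)) = 0 for all q₁, q₂ ∈ Q and μ(Θ(qⁿ)⁻¹·Θ(q)ⁿ) = 0 for all q ∈ Q and all natural numbers n. Then the pullback q ↦ μ(Θ(q)) is a homogeneous quasi-morphism on Q: it satisfies μ(Θ(qⁿ))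 = n·μ(Θ(q)) for all q ∈ Q and natural numbers n, and |μ(Θ(q₁q₂)) − μ(Θ(q₁)) − μ(Θ(q₂))| ≤ 2D for all q₁, q₂ ∈ Q. -/
/-- Pulling back a homogeneous quasi-morphism `μ` on `G` along a map `Θ : Q → G` on whose
multiplicative and power error terms `μ` vanishes yields a homogeneous quasi-morphism on `Q`. -/
theorem pullback_quasimorphism {G Q : Type*} [Group G] [Group Q] (μ : G → ℝ)
    (hhom : ∀ (g : G) (n : ℤ), μ (g ^ n) = n * μ g)
    (D : ℝ) (hD : 0 ≤ D)
    (hquasi : ∀ g₁ g₂ : G, |μ (g₁ * g₂) - μ g₁ - μ g₂| ≤ D)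
    (Θ : Q → G)
    (herr : ∀ q₁ q₂ : Q, μ ((Θ (q₁ * q₂))⁻¹ * Θ q₁ * Θ q₂) = 0)
    (hpow : ∀ (q : Q) (n : ℕ), μ ((Θ (q ^ n))⁻¹ * (Θ q) ^ n) = 0) :
    (∀ (q : Q) (n : ℕ), μ (Θ (q ^ n)) = n * μ (Θ q)) ∧
    (∀ q₁ q₂ : Q, |μ (Θ (q₁ * q₂)) - μ (Θ q₁) - μ (Θ q₂)| ≤ 2 * D) := by
  have hinv : ∀ g : G, μ g⁻¹ = -μ g := by
    intro g
    have := hhom g (-1)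
    simpa using this
  have hnat : ∀ (g : G) (n : ℕ), μ (g ^ n) = n * μ g := by
    intro g n
    have := hhom g (n : ℤ)
    simpa using this
  have hclose : ∀ a b : G, μ (a⁻¹ * b) = 0 → |μ b - μ a| ≤ D := by
    intro a b h
    have h2 := hquasi a⁻¹ b
    rw [h, hinv] at h2
    have h3 : |μ a - μ b| ≤ D := by
      have : (0 : ℝ) - -μ a - μ b = μ a - μ b := by ring
      rwa [this] at h2
    rwa [abs_sub_comm]
  constructor
  · intro q n
    -- amplification trick
    have key : ∀ k : ℕ, 0 < k →
        |μ (Θ (q ^ n)) - (n : ℝ) * μ (Θ q)| ≤ 2 * D / k := by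
      intro k hk
      have h1 : |μ (Θ (q ^ (n * k))) - ((n * k : ℕ) : ℝ) * μ (Θ q)| ≤ D := by
        have := hclose (Θ (q ^ (n * k))) ((Θ q) ^ (n * k)) (hpow q (n * k))
        rw [hnat] at this
        rwa [abs_sub_comm] at this
      have h2 : |μ (Θ (q ^ (n * k))) - (k : ℝ) * μ (Θ (q ^ n))| ≤ D := by
        have h := hpow (q ^ n) k
        rw [← pow_mul] at h
        have := hclose (Θ (q ^ (n * k))) ((Θ (q ^ n)) ^ k) h
        rw [hnat] at this
        rwa [abs_sub_comm] at this
      have h3 : |(k : ℝ) * μ (Θ (q ^ n)) - ((n * k : ℕ) : ℝ) * μ (Θ q)| ≤ 2 * D := by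
        have := abs_sub (μ (Θ (q ^ (n * k))) - ((n * k : ℕ) : ℝ) * μ (Θ q))
        calc |(k : ℝ) * μ (Θ (q ^ n)) - ((n * k : ℕ) : ℝ) * μ (Θ q)|
            = |(μ (Θ (q ^ (n * k))) - ((n * k : ℕ) : ℝ) * μ (Θ q))
              - (μ (Θ (q ^ (n * k))) - (k : ℝ) * μ (Θ (q ^ n)))| := by ring_nf
          _ ≤ |μ (Θ (q ^ (n * k))) - ((n * k : ℕ) : ℝ) * μ (Θ q)|
              + |μ (Θ (q ^ (n * k))) - (k : ℝ) * μ (Θ (q ^ n))| := abs_sub _ _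
          _ ≤ D + D := add_le_add h1 h2
          _ = 2 * D := by ring
      have hk' : (0 : ℝ) < k := by exact_mod_cast hk
      have e : (k : ℝ) * μ (Θ (q ^ n)) - ((n * k : ℕ) : ℝ) * μ (Θ q)
          = (μ (Θ (q ^ n)) - (n : ℝ) * μ (Θ q)) * k := by
        push_cast
        ring
      rw [e, abs_mul, abs_of_pos hk'] at h3
      rw [le_div_iff₀ hk']
      exact h3
    have hzero : |μ (Θ (q ^ n)) - (n : ℝ) * μ (Θ q)| = 0 := by
      by_contra h
      have hpos : 0 < |μ (Θ (q ^ n)) - (n : ℝ) * μ (Θ q)| :=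
        lt_of_le_of_ne (abs_nonneg _) (Ne.symm h)
      obtain ⟨k, hkgt⟩ := exists_nat_gt (2 * D / |μ (Θ (q ^ n)) - (n : ℝ) * μ (Θ q)|)
      have hk : 0 < k := by
        rcases Nat.eq_zero_or_pos k with rfl | h
        · exfalso
          simp only [Nat.cast_zero] at hkgt
          have := div_nonneg (by linarith : (0:ℝ) ≤ 2 * D) (le_of_lt hpos)
          linarith
        · exact h
      have := key k hk
      have hk' : (0 : ℝ) < k := by exact_mod_cast hk
      rw [div_lt_iff₀ hpos] at hkgt
      rw [le_div_iff₀ hk'] at this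
      nlinarith
    have := abs_eq_zero.mp hzero
    linarith
  · intro q₁ q₂
    have h1 : |μ (Θ q₁ * Θ q₂) - μ (Θ (q₁ * q₂))| ≤ D := by
      apply hclose
      have := herr q₁ q₂
      rwa [mul_assoc] at this
    have h2 := hquasi (Θ q₁) (Θ q₂)
    calc |μ (Θ (q₁ * q₂)) - μ (Θ q₁) - μ (Θ q₂)|
        = |(μ (Θ q₁ * Θ q₂) - μ (Θ q₁) - μ (Θ q₂))
          - (μ (Θ q₁ * Θ q₂) - μ (Θ (q₁ * q₂)))| := by ring_nf
      _ ≤ |μ (Θ q₁ * Θ q₂) - μ (Θ q₁) - μ (Θ q₂)|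
          + |μ (Θ q₁ * Θ q₂) - μ (Θ (q₁ * q₂))| := abs_sub _ _
      _ ≤ D + D := add_le_add h2 h1
      _ = 2 * D := by ring
end

section
/- Let K = HahnSeries ℝ ℂ be the field of generalized Laurent series with complex coefficients and real exponents, and for λ ∈ ℝ write s^λ ∈ K for the monomial HahnSeries.single λ 1 (so s = s¹). Let n ≥ 1 and 0 ≤ k ≤ n−1 be integers, let λ ∈ ℝ, and let p₁, …, p_n ∈ K be nonzero elements satisfying: p_i − s·(p₁⋯p_n)⁻¹ = 0 for all 1 ≤ i ≤ k, and p_i − s·(p₁⋯p_n)⁻¹ + s^{−λ}·p_{k+1}⋯p_n = 0 for all k+1 ≤ i ≤ n. Then p₁ = ⋯ = p_k and p_{k+1} = ⋯ = p_n; writing z for the common value of p_{k+1}, …, p_n, one has z^{n−k}·(z + s^{−λ}·z^{n−k})^{k+1} = s; and if moreover k ≥ 1 then, writing y for the common value of p₁, …, p_k, one has y^{k+1}·z^{n−k} = s and (k+1)·ord(y) + (n−k)·ord(z) = 1, where ord(x) denotes the smallest exponent in the support of a nonzero Hahn series x. -/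
open HahnSeries

/-- The field of generalized Laurent series with complex coefficients and real exponents. -/
abbrev GenLaurent : Type := HahnSeries ℝ ℂ

/-- The monomial `s^λ`. -/
noncomputable def sPow (l : ℝ) : GenLaurent := HahnSeries.single l (1 : ℂ)

/-!
Put `u = s·(p₁⋯p_n)⁻¹`. The equations say `p_i = u` for `i ≤ k` and `p_i = u − s^{−λ}·Q`
for `i > k`, where `Q = p_{k+1}⋯p_n`; so both blocks are constant, with values `y = u` and
`z`, and then `Q = z^{n−k}`, `y = z + s^{−λ} z^{n−k}` and `s = u·p₁⋯p_n = y^{k+1} z^{n−k}`.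
Taking orders of the last identity gives the linear relation between `ord y` and `ord z`.
-/

open Finset

theorem Fin.card_filter_le_val (n k : ℕ) : #{i : Fin n | k ≤ (i : ℕ)} = n - k := by
  have h := card_filter_add_card_filter_not (s := univ) (fun i : Fin n => k ≤ (i : ℕ))
  simp only [not_le, Fin.card_filter_val_lt, card_univ, Fintype.card_fin] at h
  omega

theorem HahnSeries.order_pow_mul_pow {Γ R : Type*} [AddCommMonoid Γ] [LinearOrder Γ]
    [IsOrderedCancelAddMonoid Γ] [Semiring R] [NoZeroDivisors R] {x y : HahnSeries Γ R}
    (hx : x ≠ 0) (hy : y ≠ 0) (a b : ℕ) :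
    (x ^ a * y ^ b).order = a • x.order + b • y.order := by
  rw [order_mul (pow_ne_zero _ hx) (pow_ne_zero _ hy), order_pow, order_pow]

section CriticalPoints

variable {K ι : Type*} [Field K] [Fintype ι] (q : ι → Prop) [DecidablePred q] {c d : K}
  {p : ι → K}

theorem prod_eq_pow_mul_pow_of_const {y z : K} (hy : ∀ i, ¬ q i → p i = y)
    (hz : ∀ i, q i → p i = z) :
    ∏ i, p i = y ^ #{i | ¬ q i} * z ^ #{i | q i} := by
  rw [← prod_filter_not_mul_prod_filter univ q,
    prod_eq_pow_card fun i hi => hy i (mem_filter.mp hi).2,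
    prod_eq_pow_card fun i hi => hz i (mem_filter.mp hi).2]

theorem exists_values_of_critical (hP : ∏ i, p i ≠ 0)
    (hlow : ∀ i, ¬ q i → p i - c * (∏ j, p j)⁻¹ = 0)
    (hup : ∀ i, q i → p i - c * (∏ j, p j)⁻¹ + d * ∏ j ∈ univ.filter q, p j = 0) :
    ∃ y z : K, (∀ i, ¬ q i → p i = y) ∧ (∀ i, q i → p i = z) ∧
      y = z + d * z ^ #{i | q i} ∧ y ^ (#{i | ¬ q i} + 1) * z ^ #{i | q i} = c := by
  set u := c * (∏ j, p j)⁻¹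
  set z := u - d * ∏ j ∈ univ.filter q, p j
  have hy : ∀ i, ¬ q i → p i = u := fun i hi => sub_eq_zero.mp (hlow i hi)
  have hz : ∀ i, q i → p i = z := fun i hi => by linear_combination hup i hi
  have hQ : ∏ j ∈ univ.filter q, p j = z ^ #{i | q i} :=
    prod_eq_pow_card fun i hi => hz i (mem_filter.mp hi).2
  have hc : c = u * ∏ j, p j := by simp only [u, inv_mul_cancel_right₀ hP]
  refine ⟨u, z, hy, hz, by rw [← hQ]; ring, ?_⟩
  rw [hc, prod_eq_pow_mul_pow_of_const q hy hz]
  ring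

end CriticalPoints

theorem critical_point_structure_general (n k : ℕ) (lam : ℝ)
    (p : Fin n → GenLaurent) (hp : ∀ i, p i ≠ 0)
    (h1 : ∀ i : Fin n, (i : ℕ) < k → p i - sPow 1 * (∏ j, p j)⁻¹ = 0)
    (h2 : ∀ i : Fin n, k ≤ (i : ℕ) →
      p i - sPow 1 * (∏ j, p j)⁻¹
        + sPow (-lam) * (∏ j ∈ Finset.univ.filter (fun j : Fin n => k ≤ (j : ℕ)), p j) = 0) :
    (∀ i j : Fin n, (i : ℕ) < k → (j : ℕ) < k → p i = p j) ∧
    (∀ i j : Fin n, k ≤ (i : ℕ) → k ≤ (j : ℕ) → p i = p j) ∧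
    (∀ i : Fin n, k ≤ (i : ℕ) →
      (p i) ^ (n - k) * (p i + sPow (-lam) * (p i) ^ (n - k)) ^ (k + 1) = sPow 1) ∧
    (1 ≤ k → ∀ i j : Fin n, (i : ℕ) < k → k ≤ (j : ℕ) →
      (p i) ^ (k + 1) * (p j) ^ (n - k) = sPow 1 ∧
      ((k : ℝ) + 1) * (p i).order + ((n : ℝ) - (k : ℝ)) * (p j).order = 1) := by
  obtain ⟨y, z, hy, hz, hyz, hs⟩ := exists_values_of_critical (fun j : Fin n => k ≤ (j : ℕ))
    (prod_ne_zero_iff.mpr fun j _ => hp j) (fun i hi => h1 i (not_le.mp hi)) h2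
  simp only [not_le, Fin.card_filter_le_val] at hy hyz hs
  have hkn : ∀ j : Fin n, k ≤ (j : ℕ) → k ≤ n := fun j hj => hj.trans j.is_lt.le
  have hlow_card : ∀ j : Fin n, k ≤ (j : ℕ) → #{i : Fin n | (i : ℕ) < k} = k :=
    fun j hj => by rw [Fin.card_filter_val_lt, min_eq_right (hkn j hj)]
  refine ⟨fun i j hi hj => by rw [hy i hi, hy j hj], fun i j hi hj => by rw [hz i hi, hz j hj],
    fun i hi => ?_, fun _ i j hi hj => ?_⟩
  · rw [hz i hi, ← hyz, ← hs, hlow_card i hi]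
    ring
  have hij : p i ^ (k + 1) * p j ^ (n - k) = sPow 1 := by
    rw [hy i hi, hz j hj, ← hs, hlow_card j hj]
  refine ⟨hij, ?_⟩
  have hord := congrArg HahnSeries.order hij
  rw [order_pow_mul_pow (hp i) (hp j), sPow, order_single one_ne_zero, nsmul_eq_mul, nsmul_eq_mul,
    Nat.cast_sub (hkn j hj)] at hord
  push_cast at hord
  exact hord

/-- Critical points of the Landau–Ginzburg superpotential of the toric blowup
`(X_k^{2n}, ω_λ)` of `ℂPⁿ` along a `k`-dimensional face: the first `k` coordinates agree, the
last `n−k` coordinates agree, the common value `z` of the last coordinates satisfies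
`z^{n−k}(z + s^{−λ} z^{n−k})^{k+1} = s`, and for `k ≥ 1` the common values `y`, `z` satisfy
`y^{k+1} z^{n−k} = s` and `(k+1) ord(y) + (n−k) ord(z) = 1`. -/
theorem critical_point_structure (n k : ℕ) (hn : 1 ≤ n) (hk : k ≤ n - 1) (lam : ℝ)
    (p : Fin n → GenLaurent) (hp : ∀ i, p i ≠ 0)
    (h1 : ∀ i : Fin n, (i : ℕ) < k → p i - sPow 1 * (∏ j, p j)⁻¹ = 0)
    (h2 : ∀ i : Fin n, k ≤ (i : ℕ) →
      p i - sPow 1 * (∏ j, p j)⁻¹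
        + sPow (-lam) * (∏ j ∈ Finset.univ.filter (fun j : Fin n => k ≤ (j : ℕ)), p j) = 0) :
    (∀ i j : Fin n, (i : ℕ) < k → (j : ℕ) < k → p i = p j) ∧
    (∀ i j : Fin n, k ≤ (i : ℕ) → k ≤ (j : ℕ) → p i = p j) ∧
    (∀ i : Fin n, k ≤ (i : ℕ) →
      (p i) ^ (n - k) * (p i + sPow (-lam) * (p i) ^ (n - k)) ^ (k + 1) = sPow 1) ∧
    (1 ≤ k → ∀ i j : Fin n, (i : ℕ) < k → k ≤ (j : ℕ) →
      (p i) ^ (k + 1) * (p j) ^ (n - k) = sPow 1 ∧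
      ((k : ℝ) + 1) * (p i).order + ((n : ℝ) - (k : ℝ)) * (p j).order = 1) :=
  critical_point_structure_general n k lam p hp h1 h2
end

section
/- Let K = HahnSeries ℝ ℂ be the field of generalized Laurent series with complex coefficients and real exponents, and for λ ∈ ℝ write s^λ ∈ K for the monomial HahnSeries.single λ 1 (so s = s¹). Let n and k be integers with 0 ≤ k ≤ n−1, and let λ be a real number with λ > 0 and λ ≥ (n−k−1)/(n+1). Then every nonzero z ∈ K satisfying z^{n−k}·(z + s^{−λ}·z^{n−k})^{k+1} = s has ord(z) = (1 + λ(k+1)) / ((n−k)(k+2)), where ord(z) denotes the smallest exponent in the support of z. -/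
open HahnSeries

/-!
Taking orders turns the equation into `(n - k)·ord z + (k + 1)·ord w = 1` with
`w = z + s^{-λ} z^{n-k}`, and `ord w` is governed by the two candidate orders
`a = ord z` and `b = -λ + (n - k)·a` of its summands. If `a < b` then `ord w = a` and
`a = 1/(n + 1)`, which forces `λ < (n - k - 1)/(n + 1)`. If `a > b` then `ord w = b` and the
equation is linear in `a` with the claimed solution. If `a = b` then `λ = (n - k - 1)·a`, and
`ord w ≥ a` together with the bound on `λ` pins `a` to `1/(n + 1)`, which is again the claimed value.
-/

namespace HahnSeries

variable {Γ R : Type*} [LinearOrder Γ] [Zero Γ] [AddMonoid R]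

theorem order_add_of_order_lt {x y : HahnSeries Γ R} (hx : x ≠ 0) (h : x.order < y.order) :
    (x + y).order = x.order := by
  obtain rfl | hy := eq_or_ne y 0
  · rw [add_zero]
  have htop : (x + y).orderTop = x.orderTop := by
    apply orderTop_add_eq_left
    rwa [← order_eq_orderTop_of_ne_zero hx, ← order_eq_orderTop_of_ne_zero hy, WithTop.coe_lt_coe]
  have hxy : x + y ≠ 0 := by
    rw [← orderTop_ne_top, htop, orderTop_ne_top]
    exact hx
  rwa [← order_eq_orderTop_of_ne_zero hxy, ← order_eq_orderTop_of_ne_zero hx,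
    WithTop.coe_inj] at htop

theorem order_add_of_order_ne {R : Type*} [AddCommMonoid R] {x y : HahnSeries Γ R}
    (hx : x ≠ 0) (hy : y ≠ 0) (h : x.order ≠ y.order) :
    (x + y).order = min x.order y.order := by
  rcases h.lt_or_gt with hlt | hgt
  · rw [order_add_of_order_lt hx hlt, min_eq_left hlt.le]
  · rw [add_comm, order_add_of_order_lt hy hgt, min_eq_right hgt.le]

end HahnSeries

theorem sPow_ne_zero (l : ℝ) : sPow l ≠ 0 :=
  single_ne_zero one_ne_zero

@[simp]
theorem order_sPow (l : ℝ) : (sPow l).order = l :=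
  order_single one_ne_zero

theorem eq_of_single_slope_orders {n k lam a c : ℝ} (hk : 0 ≤ k) (hkn : k + 1 ≤ n)
    (hlam : 0 < lam) (hlam' : (n - k - 1) / (n + 1) ≤ lam)
    (hval : (n - k) * a + (k + 1) * c = 1) (hmin : min a (-lam + (n - k) * a) ≤ c)
    (hne : a ≠ -lam + (n - k) * a → c = min a (-lam + (n - k) * a)) :
    a = (1 + lam * (k + 1)) / ((n - k) * (k + 2)) := by
  rw [div_le_iff₀ (by linarith)] at hlam'
  rw [eq_div_iff (by nlinarith)]
  rcases lt_trichotomy a (-lam + (n - k) * a) with hlt | heq | hgt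
  · rw [hne hlt.ne, min_eq_left hlt.le] at hval
    nlinarith
  · rw [← heq, min_self] at hmin
    have hlam_eq : lam = (n - k - 1) * a := by linarith
    subst hlam_eq
    have ha : 0 < a := pos_of_mul_pos_right hlam (by linarith)
    have hupper : (n + 1) * a ≤ 1 := by nlinarith
    have hlower : 1 ≤ (n + 1) * a := by nlinarith
    linear_combination hupper.antisymm hlower
  · rw [hne hgt.ne', min_eq_right hgt.le] at hval
    linarith

/-- In the large-blowup regime `λ ≥ (n−k−1)/(n+1)`, every root of the cleared critical point
equation `z^{n−k}(z + s^{−λ} z^{n−k})^{k+1} = s` has order `(1 + λ(k+1))/((n−k)(k+2))`. -/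
theorem order_of_root_single_slope (n k : ℕ) (hk : k ≤ n - 1) (hn : 1 ≤ n) (lam : ℝ)
    (hlam : 0 < lam) (hlam' : ((n : ℝ) - k - 1) / ((n : ℝ) + 1) ≤ lam) :
    ∀ z : GenLaurent, z ≠ 0 →
      z ^ (n - k) * (z + sPow (-lam) * z ^ (n - k)) ^ (k + 1) = sPow 1 →
      z.order = (1 + lam * ((k : ℝ) + 1)) / (((n : ℝ) - k) * ((k : ℝ) + 2)) := by
  intro z hz hroot
  have hkn : k + 1 ≤ n := by omega
  have hcast : ((n - k : ℕ) : ℝ) = n - k := Nat.cast_sub (by omega)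
  set w := z + sPow (-lam) * z ^ (n - k)
  have hzpow : z ^ (n - k) ≠ 0 := pow_ne_zero _ hz
  have hw : w ≠ 0 := by
    rintro hw0
    rw [hw0, zero_pow k.succ_ne_zero, mul_zero] at hroot
    exact sPow_ne_zero 1 hroot.symm
  have hval : ((n : ℝ) - k) * z.order + (k + 1) * w.order = 1 := by
    have := congrArg order hroot
    rw [order_mul hzpow (pow_ne_zero _ hw), order_pow, order_pow, order_sPow] at this
    simpa [hcast] using this
  have hterm : (sPow (-lam) * z ^ (n - k)).order = -lam + ((n : ℝ) - k) * z.order := by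
    rw [order_mul (sPow_ne_zero _) hzpow, order_pow, order_sPow, nsmul_eq_mul, hcast]
  have hmin : min z.order (-lam + ((n : ℝ) - k) * z.order) ≤ w.order :=
    hterm ▸ min_order_le_order_add hw
  have hne : z.order ≠ -lam + ((n : ℝ) - k) * z.order →
      w.order = min z.order (-lam + ((n : ℝ) - k) * z.order) :=
    hterm ▸ order_add_of_order_ne hz (mul_ne_zero (sPow_ne_zero _) hzpow)
  exact eq_of_single_slope_orders k.cast_nonneg (by exact_mod_cast hkn) hlam hlam' hval hmin hne
end

section
/- Let n ≥ 2 be an integer and let α, λ, C be real numbers with α ≥ 0, λ ≥ 0, 2λ + (n+1)α ≤ 1, and C ≥ 1. Define the polytopes Δ₁ = {x ∈ ℝⁿ : x₁ ≥ 0, x_j ≥ −λ for 2 ≤ j ≤ n, (n−1)α ≤ ∑_{j=1}^n x_j ≤ C}, Δ₂ = {y = (y₂,…,y_n) ∈ ℝ^{n−1} : y_j ≥ 0 for all j, ∑_{j=2}^n y_j ≤ nα}, Δ₃ = {z ∈ ℝ : −1 + 2nα + 2λ ≤ z ≤ 1}, and Δ_α^n = {x ∈ ℝⁿ : x_j ≥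 0 for all j, (n−1)α ≤ ∑_{j=1}^n x_j ≤ 1, ∑_{j=2}^n x_j ≤ nα}. Then {x ∈ ℝⁿ : x ∈ Δ₁ and there exist y ∈ Δ₂ and z ∈ Δ₃ with x_j = y_j for all 2 ≤ j ≤ n and ∑_{j=1}^n x_j = z} = Δ_α^n. -/
open Finset

def Fin.dropHead {α : Type*} {n : ℕ} (x : Fin n → α) : Fin (n - 1) → α :=
  fun i => x ⟨(i : ℕ) + 1, by omega⟩

theorem Fin.sum_filter_one_le_eq_sum_dropHead {M : Type*} [AddCommMonoid M] {n : ℕ}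
    (x : Fin n → M) :
    ∑ i ∈ univ.filter (fun i : Fin n => 1 ≤ (i : ℕ)), x i = ∑ i, Fin.dropHead x i := by
  symm
  refine sum_bij (fun i _ => ⟨(i : ℕ) + 1, by omega⟩) ?_ ?_ ?_ (fun _ _ => rfl)
  · intro i _
    simp only [mem_filter, mem_univ, true_and]
    omega
  · intro i _ j _ hij
    simpa [Fin.ext_iff] using hij
  · intro j hj
    simp only [mem_filter, mem_univ, true_and] at hj
    exact ⟨⟨(j : ℕ) - 1, by omega⟩, mem_univ _, by ext; simp only; omega⟩

theorem Fin.forall_of_head_of_dropHead {α : Type*} {P : α → Prop} {n : ℕ} (hn : 0 < n)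
    (x : Fin n → α) (hhead : P (x ⟨0, hn⟩)) (htail : ∀ i, P (Fin.dropHead x i)) :
    ∀ i, P (x i) := by
  rintro ⟨i, hi⟩
  rcases i with _ | i
  · exact hhead
  · exact htail ⟨i, by omega⟩

/-- The Abreu–Macarini reduction identity: the projection to the `x`-coordinates of the level
set `{x₂ = y₂, …, xₙ = yₙ, ∑ xⱼ = z}` inside `Δ₁ × Δ₂ × Δ₃` is exactly the moment polytope
`Δ_α^n` of the two-fold toric blowup `(Y^{2n}, ω_α)` of `ℂPⁿ`. -/
theorem abreu_macarini_polytope_reduction (n : ℕ) (hn : 2 ≤ n) (α lam C : ℝ)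
    (hlam : 0 ≤ lam) (hsmall : 2 * lam + ((n : ℝ) + 1) * α ≤ 1) (hC : 1 ≤ C) :
    {x : Fin n → ℝ |
        (0 ≤ x ⟨0, by omega⟩ ∧ (∀ i : Fin n, 1 ≤ (i : ℕ) → -lam ≤ x i) ∧
          ((n : ℝ) - 1) * α ≤ ∑ j, x j ∧ ∑ j, x j ≤ C) ∧
        ∃ y : Fin (n - 1) → ℝ,
          ((∀ i, 0 ≤ y i) ∧ ∑ i, y i ≤ (n : ℝ) * α) ∧
          ∃ z : ℝ,
            (-1 + 2 * (n : ℝ) * α + 2 * lam ≤ z ∧ z ≤ 1) ∧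
            (∀ i : Fin (n - 1), x ⟨(i : ℕ) + 1, by have := i.isLt; omega⟩ = y i) ∧
            ∑ j, x j = z} =
      {x : Fin n → ℝ |
        (∀ i, 0 ≤ x i) ∧ ((n : ℝ) - 1) * α ≤ ∑ j, x j ∧ ∑ j, x j ≤ 1 ∧
          ∑ i ∈ univ.filter (fun i : Fin n => 1 ≤ (i : ℕ)), x i ≤ (n : ℝ) * α} := by
  ext x
  simp only [Set.mem_ofPred_eq, Fin.sum_filter_one_le_eq_sum_dropHead]
  constructor
  · rintro ⟨⟨h0, -, hlo, -⟩, y, ⟨hy0, hysum⟩, z, ⟨-, hz1⟩, hxy, rfl⟩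
    obtain rfl : y = Fin.dropHead x := (funext hxy).symm
    exact ⟨Fin.forall_of_head_of_dropHead (by omega) x h0 hy0, hlo, hz1, hysum⟩
  · rintro ⟨h0, hlo, hhi, htail⟩
    -- `hsmall` is exactly what puts the lower face `∑ xⱼ = (n-1)α` of `Δ_α^n` inside `Δ₃`.
    have hz : -1 + 2 * (n : ℝ) * α + 2 * lam ≤ ∑ j, x j := by linarith
    exact ⟨⟨h0 _, fun i _ => (neg_nonpos.2 hlam).trans (h0 i), hlo, hhi.trans hC⟩,
      Fin.dropHead x, ⟨fun _ => h0 _, htail⟩, ∑ j, x j, ⟨hz, hhi⟩, fun _ => rfl, rfl⟩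
end
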